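/- Let n ≥ 1 be odd and let A be a finite set with k = |A| ≥ 2. Let the dihedral group D_n of order 2n act on ℤ/nℤ by: the rotation r^j sends x to x + j, and the reflection s·r^j sends x to j − x; let D_n act on colorings f : ℤ/nℤ → A by (g•f)(x) = f(g⁻¹•x). Then the number of orbits of colorings that are free (of cardinality 2n) equals (1/2)·Σ_{d∣n} μ(n/d)·((1/n)·k^d − k^{(d+1)/2}), where μ is the Möbius function (note every divisor d of odd n is odd, so (d+1)/2 is an integer). -/

import Mathlib

/-- The dihedral action on the vertices `ZMod n` of a regular `n`-gon: rotations
act by translation and the reflection `sr j = s·r^j` sends `x` to `j - x`. -/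
instance dihedralVertexAction (n : ℕ) : MulAction (DihedralGroup n) (ZMod n) where
  smul g x := match g with
    | DihedralGroup.r j => x - j
    | DihedralGroup.sr j => j - x
  one_smul x := by show x - 0 = x; rw [sub_zero]
  mul_smul a b x := by
    cases a with
    | r i =>
      cases b with
      | r j => show x - (i + j) = x - j - i; ring
      | sr j => show (j - i) - x = (j - x) - i; ring
    | sr i =>
      cases b with
      | r j => show (i + j) - x = i - (x - j); ring
      | sr j => show x - (j - i) = i - (j - x); ring

/-- The induced action on colorings `f : ZMod n → A`: `(g • f) x = f (g⁻¹ • x)`. -/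
instance dihedralColoringAction (n : ℕ) (A : Type*) :
    MulAction (DihedralGroup n) (ZMod n → A) where
  smul g f := fun x => f (g⁻¹ • x)
  one_smul f := by
    funext x; show f ((1 : DihedralGroup n)⁻¹ • x) = f x; rw [inv_one, one_smul]
  mul_smul a b f := by
    funext x; show f ((a * b)⁻¹ • x) = f (b⁻¹ • a⁻¹ • x)
    rw [mul_inv_rev, mul_smul]

/-! A coloring has trivial stabilizer iff no nontrivial rotation fixes it (it is *primitive*)
and no reflection fixes it. A primitive coloring is fixed by at most one reflection, since the
product of two reflections is a rotation; and as `2` is invertible modulo an odd `n`, every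
reflection is conjugate to `s` by a rotation. Hence the free colorings number `P(n) - n S(n)`,
where `P(e)` counts colorings of minimal rotation period `e` and `S(e)` those among them fixed
by `s`. A coloring of period `d ∣ n` is a coloring of `ℤ/dℤ`, and an `s`-invariant one is
determined by its values on `0, …, (d - 1)/2`, so `∑_{e ∣ d} P(e) = k^d` and
`∑_{e ∣ d} S(e) = k^{(d+1)/2}`. Möbius inversion and `|free colorings| = 2n · |free orbits|`
conclude. -/

open MulAction DihedralGroup Function

section FreeOrbits

variable {G X : Type*} [Group G] [MulAction G X] [Finite G]

theorem MulAction.card_orbit_eq_card_group_iff (x : X) :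
    Nat.card (orbit G x) = Nat.card G ↔ stabilizer G x = ⊥ := by
  have h := (stabilizer G x).card_mul_index
  rw [index_stabilizer, ← Nat.card_coe_set_eq] at h
  have : Nonempty (orbit G x) := ⟨⟨x, mem_orbit_self x⟩⟩
  have : Finite (orbit G x) := (Set.finite_range _).to_subtype
  have : 0 < Nat.card (orbit G x) := Nat.card_pos
  rw [← Subgroup.card_eq_one]
  constructor
  · intro h'; rw [h'] at h; nlinarith
  · intro h'; rw [← h, h', one_mul]

theorem MulAction.card_free_orbits_mul_card_group [Finite X] :
    Nat.card {ω : orbitRel.Quotient G X // Nat.card ω.orbit = Nat.card G} * Nat.card G =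
      Nat.card {x : X // stabilizer G x = ⊥} := by
  let _ : Fintype {ω : orbitRel.Quotient G X // Nat.card ω.orbit = Nat.card G} :=
    Fintype.ofFinite _
  rw [← Nat.card_congr (Equiv.sigmaSubtypeFiberEquivSubtype
    (Quotient.mk'' : X → orbitRel.Quotient G X)
    (q := fun ω : orbitRel.Quotient G X => Nat.card ω.orbit = Nat.card G)
    (fun x => (card_orbit_eq_card_group_iff x).symm)), Nat.card_sigma,
    Nat.card_eq_fintype_card, ← smul_eq_mul, ← Finset.card_univ, ← Finset.sum_const]
  refine Finset.sum_congr rfl fun ω _ => ?_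
  exact ω.2.symm.trans <|
    Nat.card_congr (Equiv.subtypeEquivRight fun _ => orbitRel.Quotient.mem_orbit)

end FreeOrbits

theorem MulAction.period_smul_of_commute {G α : Type*} [Group G] [MulAction G α] {g h : G}
    (hc : Commute g h) (a : α) : period g (h • a) = period g a := by
  have key : ∀ k : ℕ, g ^ k • h • a = h • a ↔ g ^ k • a = a := fun k => by
    rw [← mul_smul, (hc.pow_left k).eq, mul_smul, smul_left_cancel_iff]
  exact Nat.dvd_antisymm (pow_smul_eq_iff_period_dvd.mp ((key _).mpr (pow_period_smul g a)))
    (pow_smul_eq_iff_period_dvd.mp ((key _).mp (pow_period_smul g (h • a))))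

theorem MulAction.card_and_conj_smul_eq_self {G α : Type*} [Group G] [MulAction G α]
    {P : α → Prop} (g h : G) (hP : ∀ a, P (h • a) ↔ P a) :
    Nat.card {a : α // P a ∧ (h * g * h⁻¹) • a = a} =
      Nat.card {a : α // P a ∧ g • a = a} :=
  Nat.card_congr <| .symm <| (MulAction.toPerm h : Equiv.Perm α).subtypeEquiv fun a => by
    simp [hP, mul_smul, smul_left_cancel_iff]

theorem Nat.card_subtype_and_not_add_card_subtype_and {α : Type*} [Finite α]
    (p q : α → Prop) :
    Nat.card {x // p x ∧ ¬ q x} + Nat.card {x // p x ∧ q x} = Nat.card {x // p x} := by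
  classical
  cases nonempty_fintype α
  simp only [Nat.card_eq_fintype_card, Fintype.card_subtype]
  rw [add_comm, ← Finset.filter_filter, ← Finset.filter_filter,
    Finset.card_filter_add_card_filter_not]

theorem Nat.card_subtype_dvd_and {X : Type*} [Finite X] (p : X → ℕ) (Q : X → Prop) {d : ℕ}
    (hd : d ≠ 0) :
    Nat.card {x // p x ∣ d ∧ Q x} = ∑ e ∈ d.divisors, Nat.card {x // p x = e ∧ Q x} := by
  classical
  cases nonempty_fintype X
  simp only [Nat.card_eq_fintype_card, Fintype.card_subtype]
  rw [Finset.card_eq_sum_card_fiberwise (f := p) (t := d.divisors)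
    fun x hx => Nat.mem_divisors.mpr ⟨(Finset.mem_filter.mp hx).2.1, hd⟩]
  refine Finset.sum_congr rfl fun e he => ?_
  rw [Finset.filter_filter]
  refine congrArg Finset.card (Finset.filter_congr fun x _ => ?_)
  constructor
  · exact fun ⟨⟨_, hq⟩, hpe⟩ => ⟨hpe, hq⟩
  · rintro ⟨rfl, hq⟩
    exact ⟨⟨Nat.dvd_of_mem_divisors he, hq⟩, rfl⟩

theorem Function.LeftInverse.card_subtype_fun {X Y A : Type*} {s : Y → X} {π : X → Y}
    (h : LeftInverse π s) (Q : (Y → A) → Prop) :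
    Nat.card {f : X → A // (∀ x, f (s (π x)) = f x) ∧ Q (f ∘ s)} =
      Nat.card {g : Y → A // Q g} :=
  Nat.card_congr
    { toFun f := ⟨f.1 ∘ s, f.2.2⟩
      invFun g := ⟨g.1 ∘ π, fun x => congrArg g.1 (h (π x)), by
        simpa only [comp_assoc, h.comp_eq_id, comp_id] using g.2⟩
      left_inv f := Subtype.ext (funext f.2.1)
      right_inv g := Subtype.ext (funext fun y => congrArg g.1 (h y)) }

theorem Function.LeftInverse.card_fun_factor {X Y A : Type*} {s : Y → X} {π : X → Y}
    (h : LeftInverse π s) :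
    Nat.card {f : X → A // ∀ x, f (s (π x)) = f x} = Nat.card (Y → A) := by
  simpa using h.card_subtype_fun (A := A) fun _ => True

namespace ZMod

variable {n d : ℕ} {A : Type*}

theorem leftInverse_castHom_val [NeZero d] (hd : d ∣ n) :
    LeftInverse (castHom hd (ZMod d)) fun y : ZMod d => (y.val : ZMod n) := fun y => by
  rw [map_natCast, natCast_zmod_val]

theorem periodic_iff_castHom_val [NeZero n] [NeZero d] (hd : d ∣ n) {f : ZMod n → A} :
    Periodic f d ↔ ∀ x, f ((castHom hd (ZMod d) x).val : ZMod n) = f x := by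
  refine ⟨fun hf x => ?_, fun hf x => ?_⟩
  · rw [castHom_apply, cast_eq_val, val_natCast]
    conv_rhs =>
      rw [← natCast_zmod_val x, ← Nat.mod_add_div' x.val d, Nat.cast_add, Nat.cast_mul]
    exact (hf.nat_mul _ _).symm
  · rw [← hf (x + d), ← hf x, map_add, map_natCast, natCast_self, add_zero]

theorem even_iff_even_comp_val [NeZero d] (hd : d ∣ n) {f : ZMod n → A}
    (hf : ∀ x, f ((castHom hd (ZMod d) x).val : ZMod n) = f x) :
    f.Even ↔ (f ∘ fun y : ZMod d => (y.val : ZMod n)).Even := by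
  refine ⟨fun h y => ?_, fun h x => ?_⟩
  · have := hf (-(y.val : ZMod n))
    rwa [map_neg, leftInverse_castHom_val hd y, h] at this
  · have := h (castHom hd (ZMod d) x)
    rwa [comp_apply, comp_apply, ← map_neg, hf, hf] at this

theorem card_periodic [NeZero n] [NeZero d] (hd : d ∣ n) :
    Nat.card {f : ZMod n → A // Periodic f d} = Nat.card A ^ d := by
  simp_rw [periodic_iff_castHom_val hd]
  rw [(leftInverse_castHom_val hd).card_fun_factor, Nat.card_fun, Nat.card_zmod]

theorem card_periodic_and_even [NeZero n] [NeZero d] (hd : d ∣ n) :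
    Nat.card {f : ZMod n → A // Periodic f d ∧ f.Even} =
      Nat.card {g : ZMod d → A // g.Even} := by
  rw [← (leftInverse_castHom_val hd).card_subtype_fun (A := A) Function.Even]
  refine Nat.card_congr (Equiv.subtypeEquivRight fun f => ?_)
  rw [periodic_iff_castHom_val hd]
  exact and_congr_right (even_iff_even_comp_val hd)

theorem val_add_val_neg [NeZero d] (y : ZMod d) :
    y.val + (-y).val = if y.val = 0 then 0 else d := by
  split_ifs with hy
  · simp [(val_eq_zero y).mp hy]
  · rw [neg_val, if_neg (mt (val_eq_zero y).mpr hy)]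
    have := val_lt y
    omega

theorem card_even (hd : Odd d) :
    Nat.card {g : ZMod d → A // g.Even} = Nat.card A ^ ((d + 1) / 2) := by
  have : NeZero d := ⟨hd.pos.ne'⟩
  -- `fold y` is the representative of `{y, -y}` among `0, …, (d - 1) / 2`.
  let fold (y : ZMod d) : Fin ((d + 1) / 2) := ⟨min y.val (-y).val, by
    have := val_add_val_neg y
    have := val_lt y
    obtain ⟨t, rfl⟩ := hd
    split_ifs at * <;> omega⟩
  have hfold : LeftInverse fold fun i => ((i : ℕ) : ZMod d) := fun i => by
    have hi : ((i : ℕ) : ZMod d).val = i := val_cast_of_lt (by omega)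
    have := val_add_val_neg (i : ZMod d)
    rw [hi] at this
    ext
    simp only [fold, hi]
    obtain ⟨t, rfl⟩ := hd
    split_ifs at * <;> omega
  have hsection (y : ZMod d) :
      ((fold y : ℕ) : ZMod d) = y ∨ ((fold y : ℕ) : ZMod d) = -y := by
    simp only [fold, min_def]
    split_ifs
    · exact .inl (natCast_zmod_val y)
    · exact .inr (natCast_zmod_val (-y))
  have heven (g : ZMod d → A) : g.Even ↔ ∀ y, g ((fold y : ℕ) : ZMod d) = g y := by
    refine ⟨fun hg y => (hsection y).elim (congrArg g) fun h => h ▸ hg y, fun hg y => ?_⟩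
    have : fold (-y) = fold y := Fin.ext (by simp only [fold, neg_neg, min_comm])
    rw [← hg (-y), this, hg]
  simp_rw [heven]
  rw [hfold.card_fun_factor, Nat.card_fun, Nat.card_eq_fintype_card (α := Fin _),
    Fintype.card_fin]

end ZMod

namespace DihedralGroup

variable {n : ℕ} {A : Type*}

theorem r_smul_apply (j : ZMod n) (f : ZMod n → A) (x : ZMod n) :
    (r j • f) x = f (x + j) :=
  congrArg f (sub_neg_eq_add x j)

theorem sr_smul_apply (j : ZMod n) (f : ZMod n → A) (x : ZMod n) :
    (sr j • f) x = f (j - x) :=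
  rfl

theorem r_smul_eq_self_iff {j : ZMod n} {f : ZMod n → A} : r j • f = f ↔ Periodic f j := by
  simp only [funext_iff, r_smul_apply, Periodic]

theorem sr_zero_smul_eq_self_iff {f : ZMod n → A} :
    (sr 0 : DihedralGroup n) • f = f ↔ f.Even := by
  simp only [funext_iff, sr_smul_apply, zero_sub, Function.Even]

theorem periodic_natCast_iff_period_dvd {f : ZMod n → A} {d : ℕ} :
    Periodic f (d : ZMod n) ↔ period (r 1 : DihedralGroup n) f ∣ d := by
  rw [← r_smul_eq_self_iff, ← r_one_pow, pow_smul_eq_iff_period_dvd]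

theorem period_r_one_dvd (f : ZMod n → A) : period (r 1 : DihedralGroup n) f ∣ n :=
  (period_dvd_orderOf _ f).trans (dvd_of_eq orderOf_r_one)

theorem exists_conj_sr_zero_eq_sr (hodd : Odd n) (j : ZMod n) :
    ∃ t : ZMod n, r t * sr 0 * (r t)⁻¹ = sr j := by
  obtain ⟨c, hc⟩ : IsUnit (2 : ZMod n) := by
    simpa using (ZMod.isUnit_iff_coprime 2 n).mpr (Nat.coprime_two_left.mpr hodd)
  -- `r t * sr 0 * (r t)⁻¹ = sr (-2 t)`
  refine ⟨-(c⁻¹ * j : ZMod n), ?_⟩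
  rw [inv_r, r_mul_sr, sr_mul_r]
  congr 1
  have : (c : ZMod n) * c⁻¹ = 1 := c.mul_inv
  rw [hc] at this
  linear_combination j * this

theorem card_period_eq_and_sr_smul_eq_self (hodd : Odd n) (j : ZMod n) :
    Nat.card {f : ZMod n → A //
        period (r 1 : DihedralGroup n) f = n ∧ (sr j : DihedralGroup n) • f = f} =
      Nat.card {f : ZMod n → A //
        period (r 1 : DihedralGroup n) f = n ∧ (sr 0 : DihedralGroup n) • f = f} := by
  obtain ⟨t, ht⟩ := exists_conj_sr_zero_eq_sr hodd j
  rw [← ht]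
  refine card_and_conj_smul_eq_self _ _ fun f => ?_
  rw [period_smul_of_commute]
  simp only [Commute, SemiconjBy, r_mul_r, add_comm]

variable [NeZero n]

theorem eq_zero_of_r_smul_eq_self {f : ZMod n → A} (hf : period (r 1 : DihedralGroup n) f = n)
    {j : ZMod n} (hj : r j • f = f) : j = 0 := by
  rw [← ZMod.natCast_zmod_val j, ← r_one_pow, pow_smul_eq_iff_period_dvd, hf] at hj
  exact (ZMod.val_eq_zero j).mp (Nat.eq_zero_of_dvd_of_lt hj (ZMod.val_lt j))

theorem eq_of_sr_smul_eq_self {f : ZMod n → A} (hf : period (r 1 : DihedralGroup n) f = n)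
    {i j : ZMod n} (hi : sr i • f = f) (hj : sr j • f = f) : i = j := by
  have : r (j - i) • f = f := by rw [← sr_mul_sr, mul_smul, hj, hi]
  exact (sub_eq_zero.mp (eq_zero_of_r_smul_eq_self hf this)).symm

theorem stabilizer_eq_bot_iff {f : ZMod n → A} :
    stabilizer (DihedralGroup n) f = ⊥ ↔
      period (r 1 : DihedralGroup n) f = n ∧ ∀ j, (sr j : DihedralGroup n) • f ≠ f := by
  constructor
  · intro h
    refine ⟨Nat.dvd_antisymm (period_r_one_dvd f) ?_, fun j hj => ?_⟩
    · have : r 1 ^ period (r 1 : DihedralGroup n) f ∈ stabilizer (DihedralGroup n) f :=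
        pow_period_smul _ _
      rw [h, Subgroup.mem_bot, ← orderOf_dvd_iff_pow_eq_one, orderOf_r_one] at this
      exact this
    · have : sr j ∈ stabilizer (DihedralGroup n) f := hj
      rw [h, Subgroup.mem_bot, one_def] at this
      cases this
  · rintro ⟨hf, hsr⟩
    refine (Subgroup.eq_bot_iff_forall _).mpr fun g hg => ?_
    cases g with
    | r j => rw [eq_zero_of_r_smul_eq_self hf hg, ← one_def]
    | sr j => exact absurd hg (hsr j)

variable [Finite A]

theorem card_period_eq_and_exists_sr_smul_eq_self (hodd : Odd n) :
    Nat.card {f : ZMod n → A //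
        period (r 1 : DihedralGroup n) f = n ∧ ∃ j, (sr j : DihedralGroup n) • f = f} =
      n * Nat.card {f : ZMod n → A //
        period (r 1 : DihedralGroup n) f = n ∧ (sr 0 : DihedralGroup n) • f = f} := by
  let e : (Σ j : ZMod n, {f : ZMod n → A //
      period (r 1 : DihedralGroup n) f = n ∧ (sr j : DihedralGroup n) • f = f}) ≃
      {f : ZMod n → A //
        period (r 1 : DihedralGroup n) f = n ∧ ∃ j, (sr j : DihedralGroup n) • f = f} :=
    .ofBijective (fun p => ⟨p.2.1, p.2.2.1, p.1, p.2.2.2⟩) ⟨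
      fun ⟨i, f, hf, hi⟩ ⟨j, g, _, hj⟩ hfg => by
        obtain rfl : f = g := congrArg Subtype.val hfg
        obtain rfl : i = j := eq_of_sr_smul_eq_self hf hi hj
        rfl,
      fun ⟨f, hf, j, hj⟩ => ⟨⟨j, f, hf, hj⟩, rfl⟩⟩
  rw [← Nat.card_congr e, Nat.card_sigma,
    Finset.sum_congr rfl fun j _ => card_period_eq_and_sr_smul_eq_self hodd j,
    Finset.sum_const, Finset.card_univ, ZMod.card, smul_eq_mul]

theorem card_stabilizer_eq_bot_add (hodd : Odd n) :
    Nat.card {f : ZMod n → A // stabilizer (DihedralGroup n) f = ⊥} +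
        n * Nat.card {f : ZMod n → A // period (r 1 : DihedralGroup n) f = n ∧ f.Even} =
      Nat.card {f : ZMod n → A // period (r 1 : DihedralGroup n) f = n} := by
  simp_rw [stabilizer_eq_bot_iff, ← sr_zero_smul_eq_self_iff,
    ← card_period_eq_and_exists_sr_smul_eq_self hodd, ← not_exists]
  exact Nat.card_subtype_and_not_add_card_subtype_and _ _

variable {d : ℕ}

theorem sum_divisors_card_period_eq (hd : d ∣ n) :
    ∑ e ∈ d.divisors, Nat.card {f : ZMod n → A // period (r 1 : DihedralGroup n) f = e} =
      Nat.card A ^ d := by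
  have : NeZero d := ⟨ne_zero_of_dvd_ne_zero (NeZero.ne n) hd⟩
  rw [← ZMod.card_periodic hd]
  simpa only [and_true, periodic_natCast_iff_period_dvd] using
    (Nat.card_subtype_dvd_and _ (fun _ => True) (NeZero.ne d)).symm

theorem sum_divisors_card_period_eq_and_even (hodd : Odd n) (hd : d ∣ n) :
    ∑ e ∈ d.divisors,
        Nat.card {f : ZMod n → A // period (r 1 : DihedralGroup n) f = e ∧ f.Even} =
      Nat.card A ^ ((d + 1) / 2) := by
  have : NeZero d := ⟨ne_zero_of_dvd_ne_zero (NeZero.ne n) hd⟩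
  rw [← ZMod.card_even (hodd.of_dvd_nat hd), ← ZMod.card_periodic_and_even hd]
  simpa only [periodic_natCast_iff_period_dvd] using
    (Nat.card_subtype_dvd_and _ Function.Even (NeZero.ne d)).symm

theorem card_period_eq_div_sub_card_period_eq_and_even_eq_sum_moebius (hodd : Odd n) :
    (Nat.card {f : ZMod n → A // period (r 1 : DihedralGroup n) f = n} : ℚ) / n -
        Nat.card {f : ZMod n → A // period (r 1 : DihedralGroup n) f = n ∧ f.Even} =
      ∑ d ∈ n.divisors, (ArithmeticFunction.moebius (n / d) : ℚ) *
        (1 / (n : ℚ) * (Nat.card A : ℚ) ^ d - (Nat.card A : ℚ) ^ ((d + 1) / 2)) := by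
  set k : ℚ := (Nat.card A : ℚ)
  let g (d : ℕ) : ℚ := 1 / (n : ℚ) * k ^ d - k ^ ((d + 1) / 2)
  have hsum (d : ℕ) (hd : d ∣ n) : ∑ e ∈ d.divisors,
      ((Nat.card {f : ZMod n → A // period (r 1 : DihedralGroup n) f = e} : ℚ) / n -
        Nat.card {f : ZMod n → A // period (r 1 : DihedralGroup n) f = e ∧ f.Even}) = g d := by
    rw [Finset.sum_sub_distrib, ← Finset.sum_div, div_eq_mul_one_div, mul_comm]
    simp only [g, k]
    exact_mod_cast congrArg₂ (fun a b : ℕ => 1 / (n : ℚ) * a - b)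
      (sum_divisors_card_period_eq hd) (sum_divisors_card_period_eq_and_even hodd hd)
  have hinv := (ArithmeticFunction.sum_eq_iff_sum_mul_moebius_eq_on {d | d ∣ n}
    fun _ _ h₁ h₂ => h₁.trans h₂).mp (fun d _ => hsum d) n hodd.pos dvd_rfl
  rw [← hinv, Nat.sum_divisorsAntidiagonal' fun a b => (ArithmeticFunction.moebius a : ℚ) * g b]

end DihedralGroup

theorem card_free_orbits_ngon_odd_general (n : ℕ) (hodd : Odd n)
    (A : Type*) [Fintype A] :
    (Nat.card {ω : MulAction.orbitRel.Quotient (DihedralGroup n) (ZMod n → A) //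
        Nat.card ω.orbit = 2 * n} : ℚ) =
      (1 / 2) * ∑ d ∈ n.divisors, (ArithmeticFunction.moebius (n / d) : ℚ) *
        ((1 / (n : ℚ)) * (Fintype.card A : ℚ) ^ d -
          (Fintype.card A : ℚ) ^ ((d + 1) / 2)) := by
  have : NeZero n := ⟨hodd.pos.ne'⟩
  have hfree := card_free_orbits_mul_card_group (G := DihedralGroup n) (X := ZMod n → A)
  rw [DihedralGroup.nat_card] at hfree
  rw [← Nat.card_eq_fintype_card,
    ← card_period_eq_div_sub_card_period_eq_and_even_eq_sum_moebius hodd,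
    ← card_stabilizer_eq_bot_add hodd, ← hfree]
  have : (n : ℚ) ≠ 0 := Nat.cast_ne_zero.mpr (NeZero.ne n)
  push_cast
  field_simp
  ring

/-- For odd `n ≥ 1`, the number of free orbits (orbits of
cardinality `2n`, i.e. primitive colorings up to symmetry) of the dihedral
group `D_n` acting on colorings of the vertices of a regular `n`-gon with
`k = |A| ≥ 2` colors is `(1/2) ∑_{d ∣ n} μ(n/d) ((1/n) k^d - k^{(d+1)/2})`. -/
theorem card_free_orbits_ngon_odd (n : ℕ) (hn : 1 ≤ n) (hodd : Odd n)
    (A : Type*) [Fintype A] (hA : 2 ≤ Fintype.card A) :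
    (Nat.card {ω : MulAction.orbitRel.Quotient (DihedralGroup n) (ZMod n → A) //
        Nat.card ω.orbit = 2 * n} : ℚ) =
      (1 / 2) * ∑ d ∈ n.divisors, (ArithmeticFunction.moebius (n / d) : ℚ) *
        ((1 / (n : ℚ)) * (Fintype.card A : ℚ) ^ d -
          (Fintype.card A : ℚ) ^ ((d + 1) / 2)) :=
  card_free_orbits_ngon_odd_general n hodd A
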